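/- arXiv:0803.0755 — 4 statements merged into one kernel-verified Lean document; each statement's English description precedes it below -/
import Mathlib

section
/- Let q be a prime, T ⊆ {1,...,q} with |T| = m, and let t ∈ {0,1}^q be the indicator vector of T. For the q×q circulant matrix whose rows are t, σ(t), ..., σ^{q-1}(t) (where σ is the cyclic right-shift by one position), the number of indices i ∈ {2,...,q} such that the Hamming distance between row 1 and row i is strictly less than m is at most m(m-1). -/
/-!
If `i ≠ 0` and the shifted copy `T + i` misses `T`, then every `j ∈ T` lies in exactly one of
`T`, `T + i`, so row `0` and row `i` differ on all of `T`. Hence a shift with Hamming distance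
below `|T|` is a difference `a - b` of two distinct elements of `T`, and there are at most
`|T| (|T| - 1)` of those.
-/

namespace Finset

variable {G : Type*} [AddCommGroup G]

theorem card_image_sub_offDiag_le [DecidableEq G] (T : Finset G) :
    (T.offDiag.image fun p : G × G => p.1 - p.2).card ≤ T.card * (T.card - 1) := by
  calc _ ≤ T.offDiag.card := card_image_le
    _ = T.card * (T.card - 1) := by rw [offDiag_card, Nat.mul_sub_one]

theorem subset_symmDiff_shift_of_forall_sub_notMem {T : Finset G} {i : G}
    (h : ∀ j ∈ T, j - i ∉ T) : (T : Set G) ⊆ {j | (j ∈ T) ≠ (j - i ∈ T)} := by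
  intro j hj
  simp [Finset.mem_coe.mp hj, h j hj]

theorem mem_image_sub_offDiag_of_ncard_lt [DecidableEq G] [Finite G] {T : Finset G} {i : G}
    (hi : i ≠ 0) (hlt : ({j | (j ∈ T) ≠ (j - i ∈ T)} : Set G).ncard < T.card) :
    i ∈ T.offDiag.image fun p : G × G => p.1 - p.2 := by
  by_cases hpair : ∃ j ∈ T, j - i ∈ T
  · obtain ⟨j, hj, hji⟩ := hpair
    have hne : j ≠ j - i := by rwa [ne_eq, eq_sub_iff_add_eq, add_eq_left]
    exact mem_image.mpr ⟨(j, j - i), mem_offDiag.mpr ⟨hj, hji, hne⟩, sub_sub_cancel j i⟩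
  · push Not at hpair
    have hle : T.card ≤ ({j | (j ∈ T) ≠ (j - i ∈ T)} : Set G).ncard := by
      rw [← Set.ncard_coe_finset]
      exact Set.ncard_le_ncard (subset_symmDiff_shift_of_forall_sub_notMem hpair)
        (Set.toFinite _)
    omega

theorem ncard_shifts_with_small_symmDiff_le [DecidableEq G] [Finite G] (T : Finset G) :
    {i : G | i ≠ 0 ∧ ({j | (j ∈ T) ≠ (j - i ∈ T)} : Set G).ncard < T.card}.ncard
      ≤ T.card * (T.card - 1) := by
  have hsub : {i : G | i ≠ 0 ∧ ({j | (j ∈ T) ≠ (j - i ∈ T)} : Set G).ncard < T.card} ⊆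
      ↑(T.offDiag.image fun p : G × G => p.1 - p.2) :=
    fun i ⟨hi, hlt⟩ => mem_image_sub_offDiag_of_ncard_lt hi hlt
  calc _ ≤ (T.offDiag.image fun p : G × G => p.1 - p.2 : Set G).ncard :=
        Set.ncard_le_ncard hsub (Finset.finite_toSet _)
    _ ≤ T.card * (T.card - 1) := by
        rw [Set.ncard_coe_finset]
        exact card_image_sub_offDiag_le T

end Finset

/-- Row `i` of the circulant matrix is `σ^i(t)`, whose `j`-th entry is `t (j - i)`. -/
theorem stmt_0 (q m : ℕ) (hq : 0 < q) (T : Finset (Fin q)) (hT : T.card = m) :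
    {i : Fin q | (i : ℕ) ≠ 0 ∧
      ({j : Fin q | (j ∈ T) ≠ ((j - i) ∈ T)} : Set (Fin q)).ncard < m}.ncard
      ≤ m * (m - 1) := by
  have : NeZero q := ⟨hq.ne'⟩
  subst hT
  simpa only [Fin.val_ne_zero_iff] using Finset.ncard_shifts_with_small_symmDiff_le T
end

section
/- Let p be a prime, 0 < r < p, and let v(f₁),...,v(f_m) ∈ {0,1}^{p²} be the graph indicator vectors of m distinct polynomials of degree at most r over Z_p. Let Φ be the p²×m matrix with columns v(f_i)/√p. If m < p/r + 1, then Φ satisfies (1-δ)‖z‖² ≤ ‖Φz‖² ≤ (1+δ)‖z‖² for all z ∈ R^m, where δ = (m-1)r/p < 1. -/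
/-!
The Gram matrix `ΦᵀΦ` has entries `#{a | fᵢ(a) = fⱼ(a)} / p`: it is `1` on the diagonal, and
off the diagonal at most `r/p`, because two distinct polynomials of degree `≤ r` agree in at most
`r` points. Hence `‖Φz‖² - ‖z‖² = ∑_{i ≠ j} zᵢ zⱼ Gᵢⱼ` is bounded by `(r/p) ∑_{i ≠ j} |zᵢ||zⱼ|`,
and Cauchy–Schwarz `(∑ |zᵢ|)² ≤ m ‖z‖²` bounds that by `(m-1)(r/p)‖z‖²`.
-/

open Finset Matrix

theorem Polynomial.card_filter_eval_eq_le_of_ne {R : Type*} [CommRing R] [IsDomain R]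
    [Fintype R] [DecidableEq R] {f g : Polynomial R} (hfg : f ≠ g) :
    #{a | f.eval a = g.eval a} ≤ max f.natDegree g.natDegree := by
  refine (card_le_degree_of_subset_roots fun a ha => ?_).trans (natDegree_sub_le f g)
  rw [mem_roots (sub_ne_zero.mpr hfg), IsRoot, eval_sub, sub_eq_zero]
  exact (mem_filter.mp ha).2

theorem sum_sum_erase_abs_mul_abs_le {ι : Type*} [Fintype ι] [DecidableEq ι] (z : ι → ℝ) :
    ∑ i, ∑ j ∈ univ.erase i, |z i| * |z j| ≤ (Fintype.card ι - 1) * ∑ i, z i ^ 2 := by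
  have hrow : ∀ i, ∑ j ∈ univ.erase i, |z i| * |z j| = |z i| * ∑ j, |z j| - z i ^ 2 := by
    intro i
    rw [← mul_sum, sum_erase_eq_sub (mem_univ i), mul_sub, abs_mul_abs_self, sq]
  have hcs : (∑ i, |z i|) ^ 2 ≤ Fintype.card ι * ∑ i, z i ^ 2 := by
    simpa only [sq_abs, card_univ] using
      sq_sum_le_card_mul_sum_sq (s := univ) (f := fun i => |z i|)
  simp only [hrow, sum_sub_distrib, ← sum_mul, ← sq]
  linarith

theorem abs_dotProduct_mulVec_sub_sum_sq_le {ι : Type*} [Fintype ι] [DecidableEq ι]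
    (G : Matrix ι ι ℝ) {μ : ℝ} (hμ : 0 ≤ μ) (hdiag : ∀ i, G i i = 1)
    (hoff : ∀ i j, i ≠ j → |G i j| ≤ μ) (z : ι → ℝ) :
    |z ⬝ᵥ G *ᵥ z - ∑ i, z i ^ 2| ≤ (Fintype.card ι - 1) * μ * ∑ i, z i ^ 2 := by
  have hsplit :
      z ⬝ᵥ G *ᵥ z - ∑ i, z i ^ 2 = ∑ i, ∑ j ∈ univ.erase i, z i * (G i j * z j) := by
    simp only [dotProduct, mulVec, mul_sum, ← sum_sub_distrib]
    refine sum_congr rfl fun i _ => ?_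
    rw [← add_sum_erase _ _ (mem_univ i), hdiag, one_mul, sq, add_sub_cancel_left]
  calc |z ⬝ᵥ G *ᵥ z - ∑ i, z i ^ 2|
      ≤ ∑ i, ∑ j ∈ univ.erase i, μ * (|z i| * |z j|) := by
        rw [hsplit]
        refine (abs_sum_le_sum_abs _ _).trans (sum_le_sum fun i _ => ?_)
        refine (abs_sum_le_sum_abs _ _).trans (sum_le_sum fun j hj => ?_)
        rw [abs_mul, abs_mul, mul_left_comm]
        exact mul_le_mul_of_nonneg_right (hoff i j (ne_of_mem_erase hj).symm) (by positivity)
    _ = μ * ∑ i, ∑ j ∈ univ.erase i, |z i| * |z j| := by simp only [mul_sum]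
    _ ≤ μ * ((Fintype.card ι - 1) * ∑ i, z i ^ 2) :=
        mul_le_mul_of_nonneg_left (sum_sum_erase_abs_mul_abs_le z) hμ
    _ = _ := by ring

theorem Matrix.sum_mulVec_sq {κ ι R : Type*} [Fintype κ] [Fintype ι] [CommRing R]
    (Φ : Matrix κ ι R) (z : ι → R) :
    ∑ k, (Φ *ᵥ z) k ^ 2 = z ⬝ᵥ (Φᵀ * Φ) *ᵥ z := by
  rw [← mulVec_mulVec, dotProduct_mulVec, vecMul_transpose]
  simp only [dotProduct, sq]

theorem transpose_mul_self_apply_of_graph_indicator {α β ι : Type*} [Fintype α] [Fintype β]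
    [DecidableEq β]
    (g : ι → α → β) (c : ℝ) (Φ : Matrix (α × β) ι ℝ)
    (hΦ : ∀ ab j, Φ ab j = (if ab.2 = g j ab.1 then 1 else 0) / c) (i j : ι) :
    (Φᵀ * Φ) i j = #{a | g i a = g j a} / c ^ 2 := by
  simp only [mul_apply, transpose_apply, hΦ, Fintype.sum_prod_type, div_mul_div_comm,
    ← sq, ← sum_div, ite_zero_mul_ite_zero, one_pow, ite_and, sum_ite_eq', mem_univ, if_true,
    sum_boole]

open Finset in
theorem stmt_9_general (p r m : ℕ) (hp : p.Prime) [NeZero p] (hr0 : 0 < r)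
    (hmp : (m : ℝ) < (p : ℝ) / r + 1)
    (f : Fin m → Polynomial (ZMod p)) (hinj : Function.Injective f)
    (hdeg : ∀ i, (f i).natDegree ≤ r)
    (Φ : Matrix (ZMod p × ZMod p) (Fin m) ℝ)
    (hΦ : ∀ ab j, Φ ab j = (if ab.2 = (f j).eval ab.1 then 1 else 0) / Real.sqrt p) :
    ((m : ℝ) - 1) * r / p < 1 ∧
    ∀ z : Fin m → ℝ,
      (1 - ((m : ℝ) - 1) * r / p) * ∑ k, z k ^ 2 ≤ ∑ ab, (Φ.mulVec z ab) ^ 2 ∧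
      ∑ ab, (Φ.mulVec z ab) ^ 2 ≤ (1 + ((m : ℝ) - 1) * r / p) * ∑ k, z k ^ 2 := by
  have : Fact p.Prime := ⟨hp⟩
  have hp0 : (0 : ℝ) < p := by exact_mod_cast hp.pos
  have hgram := transpose_mul_self_apply_of_graph_indicator (fun i a => (f i).eval a) (√p) Φ hΦ
  simp only [Real.sq_sqrt hp0.le] at hgram
  have hdiag : ∀ i, (Φᵀ * Φ) i i = 1 := by
    simp [hgram, ZMod.card, hp0.ne']
  have hoff : ∀ i j, i ≠ j → |(Φᵀ * Φ) i j| ≤ r / p := by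
    intro i j hij
    rw [hgram, abs_of_nonneg (by positivity)]
    gcongr
    exact_mod_cast (Polynomial.card_filter_eval_eq_le_of_ne (hinj.ne hij)).trans
      (max_le (hdeg i) (hdeg j))
  refine ⟨?_, fun z => ?_⟩
  · rw [div_lt_one hp0, ← lt_div_iff₀ (by exact_mod_cast hr0)]
    linarith
  · have h := abs_le.mp (abs_dotProduct_mulVec_sub_sum_sq_le _ (by positivity) hdiag hoff z)
    rw [Fintype.card_fin, ← mul_div_assoc] at h
    rw [Matrix.sum_mulVec_sq, sub_mul, add_mul, one_mul]
    constructor <;> linarith [h.1, h.2]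

open Finset in
/-- DeVore's deterministic construction: the matrix whose columns are the
normalized graph-indicator vectors `v(fᵢ)/√p` of `m` distinct polynomials of
degree at most `r` over `ZMod p` satisfies the RIP inequalities with constant
`δ = (m-1)r/p < 1`, provided `m < p/r + 1`. -/
theorem stmt_9 (p r m : ℕ) (hp : p.Prime) [NeZero p] (hr0 : 0 < r) (hrp : r < p)
    (hm : 0 < m) (hmp : (m : ℝ) < (p : ℝ) / r + 1)
    (f : Fin m → Polynomial (ZMod p)) (hinj : Function.Injective f)
    (hdeg : ∀ i, (f i).natDegree ≤ r)
    (Φ : Matrix (ZMod p × ZMod p) (Fin m) ℝ)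
    (hΦ : ∀ ab j, Φ ab j = (if ab.2 = (f j).eval ab.1 then 1 else 0) / Real.sqrt p) :
    ((m : ℝ) - 1) * r / p < 1 ∧
    ∀ z : Fin m → ℝ,
      (1 - ((m : ℝ) - 1) * r / p) * ∑ k, z k ^ 2 ≤ ∑ ab, (Φ.mulVec z ab) ^ 2 ∧
      ∑ ab, (Φ.mulVec z ab) ^ 2 ≤ (1 + ((m : ℝ) - 1) * r / p) * ∑ k, z k ^ 2 :=
  stmt_9_general p r m hp hr0 hmp f hinj hdeg Φ hΦ
end

section
/- Let p be a prime, 0 < r < p, and s ≥ 1. Let Ψ₀ be a matrix with sp² rows whose columns are vertical stacks of s vectors, each of which is a graph indicator vector v(f) of some polynomial f ∈ P_r (so every column of Ψ₀ has exactly sp ones), and suppose that for any two distinct columns i ≠ j, the stacked vectors in positions i and j at each of the s levels come from distinct polynomials. Then Ψ = Ψ₀/√(sp) satisfies: for every set T of m < p/r + 1 column indices and all z ∈ R^m, (1-δ)‖z‖² ≤ ‖Ψ_T z‖² ≤ (1+δ)‖z‖² with δ = (m-1)r/p. -/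
/-!
Every column of `Ψ` has unit norm, and two distinct columns have inner product
`(1/sp) ∑ₓ #{a | fₓᵢ(a) = fₓⱼ(a)} ≤ r/p`, since distinct polynomials of degree `≤ r`
agree in at most `r` points. For `z` supported on `T`, `‖Ψz‖² - ‖z‖²` is the off-diagonal
part of the Gram quadratic form, bounded by `(r/p) ∑_{i ≠ j} |zᵢ||zⱼ| ≤ (r/p)(#T - 1)‖z‖²`
by Cauchy–Schwarz.
-/

open Finset Matrix

namespace Polynomial

theorem card_filter_eval_eq_le {R : Type*} [CommRing R] [IsDomain R] [Fintype R]
    [DecidableEq R] {f g : R[X]} {r : ℕ} (hfg : f ≠ g) (hf : f.natDegree ≤ r)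
    (hg : g.natDegree ≤ r) :
    #{a | f.eval a = g.eval a} ≤ r := by
  by_contra! hlt
  refine hfg (eq_of_degree_sub_lt_of_eval_finset_eq {a | f.eval a = g.eval a} ?_
    fun a ha => (mem_filter.mp ha).2)
  calc (f - g).degree ≤ max f.degree g.degree := degree_sub_le f g
    _ ≤ r := max_le (degree_le_of_natDegree_le hf) (degree_le_of_natDegree_le hg)
    _ < _ := by exact_mod_cast hlt

end Polynomial

section Coherence

variable {m n : Type*} [Fintype m] [Fintype n]

theorem abs_dotProduct_mulVec_le_of_diag_eq_zero [DecidableEq n] {E : Matrix n n ℝ} {μ : ℝ}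
    (hdiag : ∀ i, E i i = 0) (hoff : ∀ i j, i ≠ j → |E i j| ≤ μ) (z : n → ℝ) :
    |z ⬝ᵥ E *ᵥ z| ≤ μ * ((∑ i, |z i|) ^ 2 - ∑ i, z i ^ 2) := by
  have hterm : ∀ i j,
      |z i * (E i j * z j)| ≤ μ * (|z i| * |z j| - if i = j then z i ^ 2 else 0) := by
    intro i j
    by_cases hij : i = j
    · subst hij; simp [hdiag, sq]
    · rw [if_neg hij, sub_zero, abs_mul, abs_mul, mul_left_comm]
      exact mul_le_mul_of_nonneg_right (hoff i j hij) (by positivity)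
  calc |z ⬝ᵥ E *ᵥ z| = |∑ i, ∑ j, z i * (E i j * z j)| := by
        simp only [dotProduct, mulVec, mul_sum]
    _ ≤ ∑ i, ∑ j, |z i * (E i j * z j)| :=
        (abs_sum_le_sum_abs _ _).trans (sum_le_sum fun i _ => abs_sum_le_sum_abs _ _)
    _ ≤ ∑ i, ∑ j, μ * (|z i| * |z j| - if i = j then z i ^ 2 else 0) :=
        sum_le_sum fun i _ => sum_le_sum fun j _ => hterm i j
    _ = μ * ((∑ i, |z i|) ^ 2 - ∑ i, z i ^ 2) := by
        simp only [← mul_sum, sum_sub_distrib, sum_ite_eq, mem_univ, if_true, sq, sum_mul_sum]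

theorem sq_sum_abs_le_card_mul_sum_sq {z : n → ℝ} {T : Finset n} (hz : ∀ j ∉ T, z j = 0) :
    (∑ i, |z i|) ^ 2 ≤ #T * ∑ i, z i ^ 2 := by
  have hsupp : ∀ g : ℝ → ℝ, g 0 = 0 → ∑ i, g (z i) = ∑ i ∈ T, g (z i) := fun g hg =>
    (sum_subset (subset_univ T) fun j _ hj => by rw [hz j hj, hg]).symm
  rw [hsupp _ abs_zero, hsupp (· ^ 2) (zero_pow two_ne_zero)]
  simpa only [sq_abs] using sq_sum_le_card_mul_sum_sq (s := T) (f := fun i => |z i|)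

theorem sum_sq_mulVec_eq (A : Matrix m n ℝ) (z : n → ℝ) :
    ∑ k, (A *ᵥ z) k ^ 2 = z ⬝ᵥ (Aᵀ * A) *ᵥ z := by
  rw [← mulVec_mulVec, dotProduct_mulVec, vecMul_transpose]
  simp only [dotProduct, sq]

theorem abs_sum_sq_mulVec_sub_le_of_coherence [DecidableEq n] {A : Matrix m n ℝ} {μ : ℝ}
    (hμ : 0 ≤ μ) (hdiag : ∀ i, (Aᵀ * A) i i = 1) (hoff : ∀ i j, i ≠ j → |(Aᵀ * A) i j| ≤ μ)
    {T : Finset n} {z : n → ℝ} (hz : ∀ j ∉ T, z j = 0) :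
    |∑ k, (A *ᵥ z) k ^ 2 - ∑ k, z k ^ 2| ≤ (#T - 1) * μ * ∑ k, z k ^ 2 := by
  have hE := abs_dotProduct_mulVec_le_of_diag_eq_zero (E := Aᵀ * A - 1) (μ := μ)
    (fun i => by simp [hdiag])
    (fun i j hij => by simpa [one_apply_ne hij] using hoff i j hij) z
  have hnorm : z ⬝ᵥ z = ∑ k, z k ^ 2 := by simp only [dotProduct, sq]
  rw [sub_mulVec, one_mulVec, dotProduct_sub, hnorm, ← sum_sq_mulVec_eq] at hE
  calc _ ≤ μ * ((∑ i, |z i|) ^ 2 - ∑ i, z i ^ 2) := hE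
    _ ≤ μ * (#T * ∑ k, z k ^ 2 - ∑ k, z k ^ 2) := by
        gcongr; exact sq_sum_abs_le_card_mul_sum_sq hz
    _ = _ := by ring

end Coherence

section GraphIndicator

variable {α β : Type*} [DecidableEq β]

def graphIndicator (f : α → β) (ab : α × β) : ℝ :=
  if ab.2 = f ab.1 then 1 else 0

variable [Fintype α] [Fintype β]

theorem sum_graphIndicator_mul_graphIndicator (f g : α → β) :
    ∑ ab, graphIndicator f ab * graphIndicator g ab = #{a | f a = g a} := by
  simp only [graphIndicator, Fintype.sum_prod_type, ite_mul, one_mul, zero_mul, sum_ite_eq',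
    mem_univ, if_true, sum_boole]

theorem gram_eq_of_eq_graphIndicator_div_sqrt {ι κ : Type*} [Fintype ι]
    {F : ι → κ → α → β} {c : ℝ} (hc : 0 ≤ c) {Ψ : Matrix (ι × (α × β)) κ ℝ}
    (hΨ : ∀ x ab j, Ψ (x, ab) j = graphIndicator (F x j) ab / √c) (i j : κ) :
    (Ψᵀ * Ψ) i j = (∑ x, (#{a | F x i a = F x j a} : ℝ)) / c := by
  rw [mul_apply, Fintype.sum_prod_type, sum_div]
  refine sum_congr rfl fun x _ => ?_
  simp only [transpose_apply, hΨ, div_mul_div_comm, Real.mul_self_sqrt hc, ← sum_div,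
    sum_graphIndicator_mul_graphIndicator]

end GraphIndicator

theorem stmt_10_general (p r s M : ℕ) (hp : p.Prime) [NeZero p]
    (hs : 1 ≤ s)
    (F : Fin s → Fin M → Polynomial (ZMod p))
    (hdeg : ∀ x j, (F x j).natDegree ≤ r)
    (hdist : ∀ x : Fin s, ∀ i j : Fin M, i ≠ j → F x i ≠ F x j)
    (Ψ : Matrix (Fin s × (ZMod p × ZMod p)) (Fin M) ℝ)
    (hΨ : ∀ x ab j, Ψ (x, ab) j =
      (if ab.2 = (F x j).eval ab.1 then 1 else 0) / Real.sqrt (s * p)) :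
    ∀ T : Finset (Fin M), ((T.card : ℝ) < (p : ℝ) / r + 1) →
      ∀ z : Fin M → ℝ, (∀ j, j ∉ T → z j = 0) →
        (1 - ((T.card : ℝ) - 1) * r / p) * ∑ k, z k ^ 2
            ≤ ∑ row, (Ψ.mulVec z row) ^ 2 ∧
        ∑ row, (Ψ.mulVec z row) ^ 2
            ≤ (1 + ((T.card : ℝ) - 1) * r / p) * ∑ k, z k ^ 2 := by
  have := Fact.mk hp
  intro T _ z hz
  have hsp : (0 : ℝ) < s * p := mul_pos (by exact_mod_cast hs) (by exact_mod_cast hp.pos)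
  have hG := gram_eq_of_eq_graphIndicator_div_sqrt (F := fun x j a => (F x j).eval a) hsp.le hΨ
  have hdiag : ∀ i, (Ψᵀ * Ψ) i i = 1 := fun i => by
    simp only [hG, filter_true, card_univ, ZMod.card, sum_const, Fintype.card_fin, nsmul_eq_mul]
    exact div_self hsp.ne'
  have hoff : ∀ i j, i ≠ j → |(Ψᵀ * Ψ) i j| ≤ r / p := fun i j hij => by
    rw [hG, abs_of_nonneg (div_nonneg (sum_nonneg fun _ _ => Nat.cast_nonneg _) hsp.le),
      div_le_div_iff₀ hsp (by exact_mod_cast hp.pos)]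
    calc _ ≤ (∑ _x : Fin s, (r : ℝ)) * p := by
          gcongr with x
          exact_mod_cast
            Polynomial.card_filter_eval_eq_le (hdist x i j hij) (hdeg x i) (hdeg x j)
      _ = r * (s * p) := by simp only [sum_const, card_univ, Fintype.card_fin, nsmul_eq_mul]; ring
  have h := abs_le.mp (abs_sum_sq_mulVec_sub_le_of_coherence (by positivity) hdiag hoff hz)
  rw [← mul_div_assoc] at h
  constructor <;> linarith [h.1, h.2]

open Finset in
/-- Block DeVore construction: `Ψ₀` has columns that are vertical stacks of `s`
graph-indicator vectors of polynomials of degree at most `r` over `ZMod p`,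
with distinct polynomials in distinct columns at each of the `s` levels.  Then
`Ψ = Ψ₀/√(sp)` satisfies the RIP inequalities with constant `δ = (m-1)r/p` for
every support `T` of size `m < p/r + 1`. -/
theorem stmt_10 (p r s M : ℕ) (hp : p.Prime) [NeZero p] (hr0 : 0 < r)
    (hrp : r < p) (hs : 1 ≤ s)
    (F : Fin s → Fin M → Polynomial (ZMod p))
    (hdeg : ∀ x j, (F x j).natDegree ≤ r)
    (hdist : ∀ x : Fin s, ∀ i j : Fin M, i ≠ j → F x i ≠ F x j)
    (Ψ : Matrix (Fin s × (ZMod p × ZMod p)) (Fin M) ℝ)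
    (hΨ : ∀ x ab j, Ψ (x, ab) j =
      (if ab.2 = (F x j).eval ab.1 then 1 else 0) / Real.sqrt (s * p)) :
    ∀ T : Finset (Fin M), ((T.card : ℝ) < (p : ℝ) / r + 1) →
      ∀ z : Fin M → ℝ, (∀ j, j ∉ T → z j = 0) →
        (1 - ((T.card : ℝ) - 1) * r / p) * ∑ k, z k ^ 2
            ≤ ∑ row, (Ψ.mulVec z row) ^ 2 ∧
        ∑ row, (Ψ.mulVec z row) ^ 2
            ≤ (1 + ((T.card : ℝ) - 1) * r / p) * ∑ k, z k ^ 2 :=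
  stmt_10_general p r s M hp hs F hdeg hdist Ψ hΨ
end

section
/- Consider an n×N Toeplitz block matrix Φ whose (i,j) block (of size d×e) is Φ_{k+i-j}, built from independent blocks Φ_1,...,Φ_{k+l-1} of jointly independent random entries (l block-rows, k block-columns). Fix T ⊆ {1,...,N} with |T| = m and fix a row index i. Then the number of other rows of Φ_T that are stochastically dependent on row i (i.e., share at least one underlying random variable with row i, counted through the Toeplitz block structure) is at most min(m(m-1), l-1) when m(m-1) < l, and at most l-1 in general. -/
/-!
A dependent row lies in the same position `a` of its block-row, so it is determined by its
block-row index `r' ≠ r`.  That index is `r + c' - c` for two columns `(c, b), (c', b)` of `T`,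
which are distinct since otherwise `r' = r`; hence there are at most `l - 1` and at most
`m (m - 1)` dependent rows.
-/

theorem Finset.card_image_offDiag_le {α β : Type*} [DecidableEq α] [DecidableEq β]
    (s : Finset α) (f : α × α → β) : (s.offDiag.image f).card ≤ s.card * (s.card - 1) := by
  rw [Nat.mul_sub_one, ← Finset.offDiag_card]
  exact Finset.card_image_le

namespace ToeplitzBlock

variable {k l d e : ℕ} (T : Finset (Fin k × Fin e)) (r : Fin l) (a : Fin d)

/-- Row `(r, a)` of `Φ` is block-row `r`, row `a` within it; entry `((r, a), (c, b))` is entry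
`(a, b)` of `Φ_{k + r - c}`, so rows `(r, a)`, `(x.1, x.2)` share an entry exactly when `x.2 = a`
and some `(c, b), (c', b) ∈ T` have `r - c = x.1 - c'`. -/
def dependentRows : Set (Fin l × Fin d) :=
  {x | x ≠ (r, a) ∧ x.2 = a ∧
    ∃ cb ∈ T, ∃ cb' ∈ T, cb.2 = cb'.2 ∧ (r : ℤ) - (cb.1 : ℤ) = (x.1 : ℤ) - (cb'.1 : ℤ)}

variable {T r a}

theorem fst_ne_of_mem_dependentRows {x : Fin l × Fin d} (hx : x ∈ dependentRows T r a) :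
    x.1 ≠ r := by
  obtain ⟨hne, ha, -⟩ := hx
  exact fun h => hne (Prod.ext h ha)

theorem ncard_dependentRows_eq :
    (dependentRows T r a).ncard = (Prod.fst '' dependentRows T r a).ncard := by
  refine (Set.InjOn.ncard_image ?_).symm
  rintro x ⟨-, hx, -⟩ y ⟨-, hy, -⟩ h
  exact Prod.ext h (hx.trans hy.symm)

theorem ncard_dependentRows_le_sub_one : (dependentRows T r a).ncard ≤ l - 1 := by
  have hsub : Prod.fst '' dependentRows T r a ⊆ (({r}ᶜ : Finset (Fin l)) : Set (Fin l)) := by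
    rintro _ ⟨x, hx, rfl⟩
    simpa using fst_ne_of_mem_dependentRows hx
  calc (dependentRows T r a).ncard = (Prod.fst '' dependentRows T r a).ncard :=
        ncard_dependentRows_eq
    _ ≤ (({r}ᶜ : Finset (Fin l)) : Set (Fin l)).ncard := Set.ncard_le_ncard hsub
    _ = l - 1 := by rw [Set.ncard_coe_finset, Finset.card_compl]; simp

theorem ncard_dependentRows_le_mul :
    (dependentRows T r a).ncard ≤ T.card * (T.card - 1) := by
  classical
  set shifts : Finset ℤ := T.offDiag.image fun p => (r : ℤ) - p.1.1 + p.2.1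
  have hmaps : ∀ i ∈ Prod.fst '' dependentRows T r a, ((i : ℕ) : ℤ) ∈ (shifts : Set ℤ) := by
    rintro _ ⟨x, hx, rfl⟩
    have hxr := fst_ne_of_mem_dependentRows hx
    obtain ⟨-, -, cb, hcb, cb', hcb', -, hshift⟩ := hx
    have hoff : cb ≠ cb' := by
      rintro rfl
      exact hxr (Fin.ext (by omega))
    exact Finset.mem_image.2 ⟨(cb, cb'), Finset.mem_offDiag.2 ⟨hcb, hcb', hoff⟩, by simp; omega⟩
  calc (dependentRows T r a).ncard = (Prod.fst '' dependentRows T r a).ncard :=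
        ncard_dependentRows_eq
    _ ≤ (shifts : Set ℤ).ncard :=
        Set.ncard_le_ncard_of_injOn _ hmaps fun i _ j _ h => Fin.ext (by exact_mod_cast h)
    _ ≤ T.card * (T.card - 1) := by
        rw [Set.ncard_coe_finset]
        exact T.card_image_offDiag_le _

end ToeplitzBlock

open ToeplitzBlock in
theorem stmt_14_general (k l d e m : ℕ)
    (T : Finset (Fin k × Fin e)) (hT : T.card = m)
    (r : Fin l) (a : Fin d) :
    (m * (m - 1) < l →
      {x : Fin l × Fin d | x ≠ (r, a) ∧ x.2 = a ∧
          ∃ cb ∈ T, ∃ cb' ∈ T, cb.2 = cb'.2 ∧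
            (r : ℤ) - (cb.1 : ℤ) = (x.1 : ℤ) - (cb'.1 : ℤ)}.ncard
        ≤ min (m * (m - 1)) (l - 1)) ∧
    {x : Fin l × Fin d | x ≠ (r, a) ∧ x.2 = a ∧
        ∃ cb ∈ T, ∃ cb' ∈ T, cb.2 = cb'.2 ∧
          (r : ℤ) - (cb.1 : ℤ) = (x.1 : ℤ) - (cb'.1 : ℤ)}.ncard
      ≤ l - 1 := by
  change (_ → (dependentRows T r a).ncard ≤ _) ∧ (dependentRows T r a).ncard ≤ _
  subst hT
  exact ⟨fun _ => le_min ncard_dependentRows_le_mul ncard_dependentRows_le_sub_one,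
    ncard_dependentRows_le_sub_one⟩

/-- Dependency count for Toeplitz block matrices.  Rows of `Φ` are indexed by
`(r, a) ∈ Fin l × Fin d` (block-row `r`, row `a` inside the block), columns by
`(c, b) ∈ Fin k × Fin e`; the entry at row `(r, a)`, column `(c, b)` is the
`(a, b)` entry of the block `Φ_{k + r - c}`.  A row `(r', a')` is
stochastically dependent on the fixed row `(r, a)` iff it shares an underlying
random variable, that is, `a' = a` and there are columns `(c, b), (c', b) ∈ T`
with `r - c = r' - c'`.  The number of such rows is at most `m(m-1)` when
`m(m-1) < l`, and at most `l - 1` in general. -/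
theorem stmt_14 (k l d e m : ℕ) (hl : 0 < l) (hd : 0 < d)
    (T : Finset (Fin k × Fin e)) (hT : T.card = m)
    (r : Fin l) (a : Fin d) :
    (m * (m - 1) < l →
      {x : Fin l × Fin d | x ≠ (r, a) ∧ x.2 = a ∧
          ∃ cb ∈ T, ∃ cb' ∈ T, cb.2 = cb'.2 ∧
            (r : ℤ) - (cb.1 : ℤ) = (x.1 : ℤ) - (cb'.1 : ℤ)}.ncard
        ≤ min (m * (m - 1)) (l - 1)) ∧
    {x : Fin l × Fin d | x ≠ (r, a) ∧ x.2 = a ∧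
        ∃ cb ∈ T, ∃ cb' ∈ T, cb.2 = cb'.2 ∧
          (r : ℤ) - (cb.1 : ℤ) = (x.1 : ℤ) - (cb'.1 : ℤ)}.ncard
      ≤ l - 1 :=
  stmt_14_general k l d e m T hT r a
end
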